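/- Let a, b > 0 be real numbers and 0 < t < 1. Then (a !_t b) · K(a,b)^{4t(1-t)} ≤ a ∇_t b, where K(a,b) = (a ∇ b)/(a ! b) is the Kantorovich constant. -/
import Mathlib

/-- The weighted harmonic mean of positive reals: `a !_t b = ((1-t)a⁻¹ + t b⁻¹)⁻¹`. -/
noncomputable def wharm (t a b : ℝ) : ℝ := ((1 - t) * a⁻¹ + t * b⁻¹)⁻¹

/-- The weighted arithmetic mean: `a ∇_t b = (1-t)a + t b`. -/
noncomputable def warith (t a b : ℝ) : ℝ := (1 - t) * a + t * b

/-- The Kantorovich constant `K(a,b) = (a ∇ b)/(a ! b)`. -/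
noncomputable def kant (a b : ℝ) : ℝ := ((a + b) / 2) / wharm (1 / 2) a b

theorem stmt_9 (a b t : ℝ) (ha : 0 < a) (hb : 0 < b) (ht0 : 0 < t) (ht1 : t < 1) :
    wharm t a b * kant a b ^ (4 * t * (1 - t)) ≤ warith t a b := by
  have ha' : a ≠ 0 := ha.ne'
  have hb' : b ≠ 0 := hb.ne'
  set e : ℝ := (a - b) ^ 2 / (4 * a * b) with he
  have he0 : 0 ≤ e := by positivity
  have hK : kant a b = 1 + e := by
    rw [kant, wharm, he]
    field_simp
    ring
  set s : ℝ := 4 * t * (1 - t) with hs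
  have hs0 : 0 ≤ s := by nlinarith
  have hs1 : s ≤ 1 := by nlinarith [sq_nonneg (2 * t - 1)]
  have hbern : kant a b ^ s ≤ 1 + s * e := by
    rw [hK]
    exact rpow_one_add_le_one_add_mul_self (by linarith) hs0 hs1
  have h1t : 0 < 1 - t := by linarith
  have hden : 0 < (1 - t) * b + t * a := by positivity
  have hw : wharm t a b = a * b / ((1 - t) * b + t * a) := by
    rw [wharm]
    have : (1 - t) * a⁻¹ + t * b⁻¹ = ((1 - t) * b + t * a) / (a * b) := by
      field_simp
    rw [this, inv_div]
  have hwpos : 0 < wharm t a b := by rw [hw]; positivity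
  have hid : wharm t a b * (1 + s * e) = warith t a b := by
    rw [hw, warith, he, hs]
    field_simp
    ring
  calc wharm t a b * kant a b ^ s ≤ wharm t a b * (1 + s * e) := by
        exact mul_le_mul_of_nonneg_left hbern hwpos.le
    _ = warith t a b := hid
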